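/- (Null space of the subproblem constraint matrix.) Let λ_0,…,λ_N, λ_tc ∈ ℝ^{nx}. The following are equivalent: (i) λ_t = A_tᵀ λ_{t+1} for all t = 0,…,N−1, B_tᵀ λ_{t+1} = 0 for all t = 0,…,N−1, and λ_N = −λ_tc; (ii) 𝒮ᵀ λ_tc = 0 and λ_t = −Φ(t)ᵀ λ_tc for all t = 0,…,N. Equivalently, the null space of the transpose of the MPC subproblem equality-constraint matrix A_e (whose block rows encode the initial constraint x_0 = x̄, the dynamics constraints, and the terminal constraint) consists exactly of the vectors Z·w with w ∈ ker(𝒮ᵀ), where Z = [−𝒜, −𝒟, I]ᵀ with block rows −Φ(t)ᵀ (t = 0,…,N) and I. -/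
import Mathlib


open Matrix Finset

/-- **Null space of the transpose of the subproblem constraint matrix (Theorem 2).**
For `λ_0,…,λ_N, λ_tc ∈ ℝ^{nx}` the following are equivalent:
(i) `λ_t = A_tᵀ λ_{t+1}` and `B_tᵀ λ_{t+1} = 0` for all `t < N`, and `λ_N = −λ_tc`;
(ii) `𝒮ᵀ λ_tc = 0` (i.e. `B_tᵀ Φ(t+1)ᵀ λ_tc = 0` for all `t < N`) and
`λ_t = −Φ(t)ᵀ λ_tc` for all `t ≤ N`.
Hence `ker(A_eᵀ) = { Z w : w ∈ ker(𝒮ᵀ) }` with `Z = [−𝒜, −𝒟, I]ᵀ`. -/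
theorem nullspace_of_constraint_matrix_transpose
    (N nx nu : ℕ) (hN : 1 ≤ N)
    (A : ℕ → Matrix (Fin nx) (Fin nx) ℝ)
    (B : ℕ → Matrix (Fin nx) (Fin nu) ℝ)
    (Phi : ℕ → Matrix (Fin nx) (Fin nx) ℝ)
    (hPhiN : Phi N = 1)
    (hPhi : ∀ t < N, Phi t = Phi (t + 1) * A t)
    (lam : ℕ → Fin nx → ℝ) (lamtc : Fin nx → ℝ) :
    ((∀ t < N, lam t = (A t)ᵀ *ᵥ lam (t + 1)) ∧
     (∀ t < N, (B t)ᵀ *ᵥ lam (t + 1) = 0) ∧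
     lam N = -lamtc)
    ↔
    ((∀ t < N, (B t)ᵀ *ᵥ ((Phi (t + 1))ᵀ *ᵥ lamtc) = 0) ∧
     (∀ t ≤ N, lam t = -((Phi t)ᵀ *ᵥ lamtc))) := by

  constructor
  · rintro ⟨hA, hB, hNend⟩
    have key : ∀ k t, t + k = N → lam t = -((Phi t)ᵀ *ᵥ lamtc) := by
      intro k
      induction k with
      | zero =>
        intro t ht
        simp only [Nat.add_zero] at ht
        subst ht
        simp [hPhiN, hNend, Matrix.one_mulVec]
      | succ k ih =>
        intro t ht
        have htN : t < N := by omega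
        have h1 : lam (t + 1) = -((Phi (t + 1))ᵀ *ᵥ lamtc) := ih (t + 1) (by omega)
        rw [hA t htN, h1, hPhi t htN, Matrix.transpose_mul, Matrix.mulVec_neg,
          Matrix.mulVec_mulVec]
    have hlam : ∀ t ≤ N, lam t = -((Phi t)ᵀ *ᵥ lamtc) := fun t ht =>
      key (N - t) t (by omega)
    refine ⟨fun t ht => ?_, hlam⟩
    have := hB t ht
    rw [hlam (t + 1) (by omega)] at this
    rw [Matrix.mulVec_neg] at this
    have := neg_eq_zero.mp this
    exact this
  · rintro ⟨hS, hlam⟩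
    refine ⟨fun t ht => ?_, fun t ht => ?_, ?_⟩
    · rw [hlam t (by omega), hlam (t + 1) (by omega), hPhi t ht,
        Matrix.transpose_mul, Matrix.mulVec_neg, ← Matrix.mulVec_mulVec]
    · rw [hlam (t + 1) (by omega), Matrix.mulVec_neg, hS t ht, neg_zero]
    · rw [hlam N le_rfl, hPhiN]
      simp [Matrix.one_mulVec]
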